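/- Single-step identity: under assumptions (i) D_t independent of (Aᵗ⁻¹, Dᵗ⁻¹, Uᵗ⁻¹, Xᵗ) and (ii) Markov chain Xᵗ — (Aᵗ, Dᵗ, Uᵗ⁻¹) — U_t, it holds that I(Xᵗ ; A_t | Aᵗ⁻¹, Dᵗ, Uᵗ⁻¹) = I(Xᵗ ; (A_t, D_t, U_t) | Aᵗ⁻¹, Dᵗ⁻¹, Uᵗ⁻¹). -/
import Mathlib


open scoped Classical
open Finset

noncomputable def prob {Ω : Type} [Fintype Ω] (p : Ω → ℝ) (E : Ω → Prop) : ℝ :=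
  ∑ ω, if E ω then p ω else 0

noncomputable def plog (q : ℝ) : ℝ := if q = 0 then 0 else -q * Real.logb 2 q

/-- Shannon entropy (in bits) of a random variable `X` on a finite space with pmf `p`. -/
noncomputable def entropy {Ω α : Type} [Fintype Ω] (p : Ω → ℝ) (X : Ω → α) : ℝ :=
  ∑ x ∈ Finset.univ.image X, plog (prob p (fun ω => X ω = x))

/-- Conditional entropy `H(A|Z) = H(A,Z) - H(Z)` (in bits). -/
noncomputable def condEntropy {Ω α β : Type} [Fintype Ω] (p : Ω → ℝ) (A : Ω → α) (Z : Ω → β) : ℝ :=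
  entropy p (fun ω => (A ω, Z ω)) - entropy p Z

/-- Mutual information `I(X;Y)` (in bits). -/
noncomputable def mutualInfo {Ω α β : Type} [Fintype Ω] (p : Ω → ℝ) (X : Ω → α) (Y : Ω → β) : ℝ :=
  entropy p X + entropy p Y - entropy p (fun ω => (X ω, Y ω))

/-- Conditional mutual information `I(X;Y|Z) = H(X|Z) - H(X|Y,Z)` (in bits). -/
noncomputable def condMutualInfo {Ω α β γ : Type} [Fintype Ω] (p : Ω → ℝ)
    (X : Ω → α) (Y : Ω → β) (Z : Ω → γ) : ℝ :=
  condEntropy p X Z - condEntropy p X (fun ω => (Y ω, Z ω))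

/-- Expected codeword length `E[ℓ(A)]`. -/
noncomputable def expLen {Ω : Type} [Fintype Ω] (p : Ω → ℝ) (A : Ω → List Bool) : ℝ :=
  ∑ ω, p ω * (A ω).length

/-- θ(x) = x + (1+x)·log₂(1+x) − x·log₂(x); note `Real.logb 2 0 = 0`, so θ(0) = 0. -/
noncomputable def theta (x : ℝ) : ℝ :=
  x + (1 + x) * Real.logb 2 (1 + x) - x * Real.logb 2 x

/-- The inverse of θ on `[0,∞)`. -/
noncomputable def thetaInv : ℝ → ℝ := Function.invFunOn theta (Set.Ici 0)

/-- History `(X_0, …, X_{t-1})` of a discrete-time process. -/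
def hist {Ω α : Type} (X : ℕ → Ω → α) (t : ℕ) (ω : Ω) : Fin t → α := fun i => X i ω

section helpers
variable {Ω α β γ κ : Type} [Fintype Ω] (p : Ω → ℝ)

lemma plog_eq (q : ℝ) : plog q = -q * Real.logb 2 q := by
  unfold plog; split <;> simp [*]

lemma prob_congr {E F : Ω → Prop} (h : ∀ ω, E ω ↔ F ω) : prob p E = prob p F := by
  unfold prob
  exact Finset.sum_congr rfl fun ω _ => by simp only [h ω]

lemma prob_nonneg (hp : ∀ ω, 0 ≤ p ω) (E : Ω → Prop) : 0 ≤ prob p E :=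
  Finset.sum_nonneg fun ω _ => by split <;> simp [hp ω]

lemma prob_mono (hp : ∀ ω, 0 ≤ p ω) {E F : Ω → Prop} (h : ∀ ω, E ω → F ω) :
    prob p E ≤ prob p F :=
  Finset.sum_le_sum fun ω _ => by
    by_cases hE : E ω <;> simp [hE, h ω] <;> split <;> simp [hp ω]

lemma prob_false {E : Ω → Prop} (h : ∀ ω, ¬ E ω) : prob p E = 0 := by
  unfold prob; simp [h]

lemma marg (g : Ω → κ) (E : Ω → Prop) :
    ∑ x ∈ Finset.univ.image g, prob p (fun ω => g ω = x ∧ E ω) = prob p E := by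
  unfold prob
  rw [Finset.sum_comm]
  refine Finset.sum_congr rfl fun ω _ => ?_
  rw [Finset.sum_eq_single_of_mem (g ω) (Finset.mem_image_of_mem g (Finset.mem_univ ω))]
  · simp
  · intro x _ hx
    exact if_neg (by rintro ⟨h1, -⟩; exact hx h1.symm)

lemma entropy_eq_sum (g : Ω → κ) (s : Finset κ) (hs : ∀ ω, g ω ∈ s) :
    entropy p g = ∑ x ∈ s, plog (prob p fun ω => g ω = x) := by
  unfold entropy
  refine Finset.sum_subset (fun x hx => ?_) (fun x _ hx => ?_)
  · obtain ⟨ω, -, rfl⟩ := Finset.mem_image.mp hx; exact hs ω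
  · rw [prob_false]
    · simp [plog]
    · intro ω h
      exact hx (by rw [← h]; exact Finset.mem_image_of_mem g (Finset.mem_univ ω))

lemma entropy_congr (f : Ω → α) (g : Ω → β) (φ : β → α) (ψ : α → β)
    (hφ : ∀ ω, φ (g ω) = f ω) (hψ : ∀ ω, ψ (f ω) = g ω) :
    entropy p f = entropy p g := by
  have himg : Finset.univ.image f = (Finset.univ.image g).image φ := by
    ext x
    simp only [Finset.mem_image, Finset.mem_univ, true_and]
    constructor
    · rintro ⟨ω, rfl⟩; exact ⟨g ω, ⟨ω, rfl⟩, hφ ω⟩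
    · rintro ⟨y, ⟨ω, rfl⟩, rfl⟩; exact ⟨ω, (hφ ω).symm⟩
  unfold entropy
  rw [himg, Finset.sum_image ?inj]
  case inj =>
    intro y hy y' hy' hxy
    obtain ⟨ω, -, rfl⟩ := Finset.mem_image.mp hy
    obtain ⟨ω', -, rfl⟩ := Finset.mem_image.mp hy'
    have : f ω = f ω' := by rw [← hφ ω, ← hφ ω', hxy]
    rw [← hψ ω, ← hψ ω', this]
  refine Finset.sum_congr rfl fun y hy => ?_
  obtain ⟨ω₀, -, rfl⟩ := Finset.mem_image.mp hy
  congr 1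
  refine prob_congr p fun ω => ?_
  constructor
  · intro h
    have : f ω = f ω₀ := by rw [h, hφ ω₀]
    rw [← hψ ω, ← hψ ω₀, this]
  · intro h; rw [← hφ ω, h, hφ ω₀]

lemma indep_comp (f : Ω → α) (g : Ω → β) (φ : β → κ)
    (h : ∀ x y, prob p (fun ω => f ω = x ∧ g ω = y)
      = prob p (fun ω => f ω = x) * prob p (fun ω => g ω = y))
    (x : α) (c : κ) :
    prob p (fun ω => f ω = x ∧ φ (g ω) = c)
      = prob p (fun ω => f ω = x) * prob p (fun ω => φ (g ω) = c) := by
  rw [← marg p g (fun ω => f ω = x ∧ φ (g ω) = c),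
      ← marg p g (fun ω => φ (g ω) = c), Finset.mul_sum]
  refine Finset.sum_congr rfl fun y _ => ?_
  by_cases hc : φ y = c
  · have e1 : prob p (fun ω => g ω = y ∧ (f ω = x ∧ φ (g ω) = c))
        = prob p (fun ω => f ω = x ∧ g ω = y) := by
      refine prob_congr p fun ω => ?_
      constructor
      · rintro ⟨hg, hf, -⟩; exact ⟨hf, hg⟩
      · rintro ⟨hf, hg⟩; exact ⟨hg, hf, by rw [hg, hc]⟩
    have e2 : prob p (fun ω => g ω = y ∧ φ (g ω) = c) = prob p (fun ω => g ω = y) := by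
      refine prob_congr p fun ω => ?_
      constructor
      · rintro ⟨hg, -⟩; exact hg
      · intro hg; exact ⟨hg, by rw [hg, hc]⟩
    rw [e1, e2, h x y]
  · have e1 : prob p (fun ω => g ω = y ∧ (f ω = x ∧ φ (g ω) = c)) = 0 := by
      refine prob_false p fun ω => ?_
      rintro ⟨hg, -, hφc⟩; exact hc (hg ▸ hφc)
    have e2 : prob p (fun ω => g ω = y ∧ φ (g ω) = c) = 0 := by
      refine prob_false p fun ω => ?_
      rintro ⟨hg, hφc⟩; exact hc (hg ▸ hφc)
    rw [e1, e2, mul_zero]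

lemma condIndep_entropy (hp : ∀ ω, 0 ≤ p ω) (f : Ω → α) (v : Ω → β) (z : Ω → γ)
    (h : ∀ x y w,
      prob p (fun ω => f ω = x ∧ v ω = y ∧ z ω = w) * prob p (fun ω => z ω = w) =
      prob p (fun ω => f ω = x ∧ z ω = w) * prob p (fun ω => v ω = y ∧ z ω = w)) :
    entropy p (fun ω => (f ω, v ω, z ω)) + entropy p z =
    entropy p (fun ω => (f ω, z ω)) + entropy p (fun ω => (v ω, z ω)) := by
  classical
  set F := Finset.univ.image f with hF
  set V := Finset.univ.image v with hV
  set Zs := Finset.univ.image z with hZ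
  set P3 : α → β → γ → ℝ := fun x y w => prob p (fun ω => f ω = x ∧ v ω = y ∧ z ω = w) with hP3
  set Pfz : α → γ → ℝ := fun x w => prob p (fun ω => f ω = x ∧ z ω = w) with hPfz
  set Pvz : β → γ → ℝ := fun y w => prob p (fun ω => v ω = y ∧ z ω = w) with hPvz
  set Pz : γ → ℝ := fun w => prob p (fun ω => z ω = w) with hPz
  -- entropy expressions
  have H3 : entropy p (fun ω => (f ω, v ω, z ω))
      = ∑ x ∈ F, ∑ y ∈ V, ∑ w ∈ Zs, plog (P3 x y w) := by
    rw [entropy_eq_sum p _ (F ×ˢ V ×ˢ Zs)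
      (fun ω => by
        simp only [Finset.mem_product]
        exact ⟨Finset.mem_image_of_mem f (Finset.mem_univ ω),
               Finset.mem_image_of_mem v (Finset.mem_univ ω),
               Finset.mem_image_of_mem z (Finset.mem_univ ω)⟩)]
    rw [Finset.sum_product, ]
    refine Finset.sum_congr rfl fun x _ => ?_
    rw [Finset.sum_product]
    refine Finset.sum_congr rfl fun y _ => Finset.sum_congr rfl fun w _ => ?_
    congr 1
    exact prob_congr p fun ω => by simp [Prod.ext_iff, and_assoc]
  have Hfz : entropy p (fun ω => (f ω, z ω)) = ∑ x ∈ F, ∑ w ∈ Zs, plog (Pfz x w) := by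
    rw [entropy_eq_sum p _ (F ×ˢ Zs)
      (fun ω => Finset.mem_product.mpr
        ⟨Finset.mem_image_of_mem f (Finset.mem_univ ω),
         Finset.mem_image_of_mem z (Finset.mem_univ ω)⟩), Finset.sum_product]
    refine Finset.sum_congr rfl fun x _ => Finset.sum_congr rfl fun w _ => ?_
    congr 1
    exact prob_congr p fun ω => by simp [Prod.ext_iff]
  have Hvz : entropy p (fun ω => (v ω, z ω)) = ∑ y ∈ V, ∑ w ∈ Zs, plog (Pvz y w) := by
    rw [entropy_eq_sum p _ (V ×ˢ Zs)
      (fun ω => Finset.mem_product.mpr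
        ⟨Finset.mem_image_of_mem v (Finset.mem_univ ω),
         Finset.mem_image_of_mem z (Finset.mem_univ ω)⟩), Finset.sum_product]
    refine Finset.sum_congr rfl fun y _ => Finset.sum_congr rfl fun w _ => ?_
    congr 1
    exact prob_congr p fun ω => by simp [Prod.ext_iff]
  have Hz : entropy p z = ∑ w ∈ Zs, plog (Pz w) := rfl
  -- marginalization
  have hm1 : ∀ x w, ∑ y ∈ V, P3 x y w = Pfz x w := by
    intro x w
    rw [show ∑ y ∈ V, P3 x y w
        = ∑ y ∈ V, prob p (fun ω => v ω = y ∧ (f ω = x ∧ z ω = w)) from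
      Finset.sum_congr rfl fun y _ => prob_congr p fun ω => by tauto]
    exact marg p v _
  have hm2 : ∀ y w, ∑ x ∈ F, P3 x y w = Pvz y w := by
    intro y w
    rw [show ∑ x ∈ F, P3 x y w
        = ∑ x ∈ F, prob p (fun ω => f ω = x ∧ (v ω = y ∧ z ω = w)) from
      Finset.sum_congr rfl fun x _ => prob_congr p fun ω => by tauto]
    exact marg p f _
  have hm3 : ∀ w, ∑ x ∈ F, Pfz x w = Pz w := by
    intro w
    exact marg p f _
  -- pointwise key identity
  have key : ∀ x y w, plog (P3 x y w)
      = -(P3 x y w) * Real.logb 2 (Pfz x w) + -(P3 x y w) * Real.logb 2 (Pvz y w)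
        + (P3 x y w) * Real.logb 2 (Pz w) := by
    intro x y w
    by_cases h0 : P3 x y w = 0
    · simp [h0, plog]
    · have hzpos : Pz w ≠ 0 := by
        intro hz0
        apply h0
        have h1 : P3 x y w ≤ Pz w :=
          prob_mono p hp fun ω => by rintro ⟨-, -, hzw⟩; exact hzw
        have h2 : 0 ≤ P3 x y w := prob_nonneg p hp _
        linarith
      have hprod : Pfz x w * Pvz y w = P3 x y w * Pz w := (h x y w).symm
      have hfz : Pfz x w ≠ 0 := by
        intro h'; rw [h', zero_mul] at hprod
        exact mul_ne_zero h0 hzpos hprod.symm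
      have hvz : Pvz y w ≠ 0 := by
        intro h'; rw [h', mul_zero] at hprod
        exact mul_ne_zero h0 hzpos hprod.symm
      have hval : P3 x y w = Pfz x w * Pvz y w / Pz w := by
        field_simp
        linarith [hprod]
      rw [plog_eq, hval, Real.logb_div (mul_ne_zero hfz hvz) hzpos,
          Real.logb_mul hfz hvz]
      ring
  -- combine
  rw [H3, Hfz, Hvz, Hz]
  set L1 : α → γ → ℝ := fun x w => Real.logb 2 (Pfz x w) with hL1
  set L2 : β → γ → ℝ := fun y w => Real.logb 2 (Pvz y w) with hL2
  set L3 : γ → ℝ := fun w => Real.logb 2 (Pz w) with hL3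
  have key' : ∀ x y w, plog (P3 x y w)
      = P3 x y w * L3 w - P3 x y w * L1 x w - P3 x y w * L2 y w := by
    intro x y w; rw [key x y w]; ring
  have hsplit : ∑ x ∈ F, ∑ y ∈ V, ∑ w ∈ Zs, plog (P3 x y w)
      = (∑ x ∈ F, ∑ y ∈ V, ∑ w ∈ Zs, P3 x y w * L3 w)
        - (∑ x ∈ F, ∑ y ∈ V, ∑ w ∈ Zs, P3 x y w * L1 x w)
        - (∑ x ∈ F, ∑ y ∈ V, ∑ w ∈ Zs, P3 x y w * L2 y w) := by
    rw [← Finset.sum_sub_distrib, ← Finset.sum_sub_distrib]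
    refine Finset.sum_congr rfl fun x _ => ?_
    rw [← Finset.sum_sub_distrib, ← Finset.sum_sub_distrib]
    refine Finset.sum_congr rfl fun y _ => ?_
    rw [← Finset.sum_sub_distrib, ← Finset.sum_sub_distrib]
    exact Finset.sum_congr rfl fun w _ => key' x y w
  have hA : (∑ x ∈ F, ∑ y ∈ V, ∑ w ∈ Zs, P3 x y w * L1 x w)
      = ∑ x ∈ F, ∑ w ∈ Zs, Pfz x w * L1 x w := by
    refine Finset.sum_congr rfl fun x _ => ?_
    rw [Finset.sum_comm]
    refine Finset.sum_congr rfl fun w _ => ?_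
    rw [← Finset.sum_mul, hm1]
  have hB : (∑ x ∈ F, ∑ y ∈ V, ∑ w ∈ Zs, P3 x y w * L2 y w)
      = ∑ y ∈ V, ∑ w ∈ Zs, Pvz y w * L2 y w := by
    rw [Finset.sum_comm]
    refine Finset.sum_congr rfl fun y _ => ?_
    rw [Finset.sum_comm]
    refine Finset.sum_congr rfl fun w _ => ?_
    rw [← Finset.sum_mul, hm2]
  have hC : (∑ x ∈ F, ∑ y ∈ V, ∑ w ∈ Zs, P3 x y w * L3 w)
      = ∑ w ∈ Zs, Pz w * L3 w := by
    have step1 : (∑ x ∈ F, ∑ y ∈ V, ∑ w ∈ Zs, P3 x y w * L3 w)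
        = ∑ x ∈ F, ∑ w ∈ Zs, Pfz x w * L3 w := by
      refine Finset.sum_congr rfl fun x _ => ?_
      rw [Finset.sum_comm]
      refine Finset.sum_congr rfl fun w _ => ?_
      rw [← Finset.sum_mul, hm1]
    rw [step1, Finset.sum_comm]
    refine Finset.sum_congr rfl fun w _ => ?_
    rw [← Finset.sum_mul, hm3]
  have pfz : ∀ x w, plog (Pfz x w) = -(Pfz x w * L1 x w) := by
    intro x w; rw [plog_eq]; ring
  have pvz : ∀ y w, plog (Pvz y w) = -(Pvz y w * L2 y w) := by
    intro y w; rw [plog_eq]; ring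
  have pz : ∀ w, plog (Pz w) = -(Pz w * L3 w) := by
    intro w; rw [plog_eq]; ring
  simp only [hsplit, hA, hB, hC]
  simp only [pfz, pvz, pz, Finset.sum_neg_distrib]
  ring

lemma prob_unit (hsum : ∑ ω, p ω = 1) (w : Unit) :
    prob p (fun _ : Ω => (() : Unit) = w) = 1 := by
  unfold prob
  simp [hsum]

lemma indep_entropy (hp : ∀ ω, 0 ≤ p ω) (hsum : ∑ ω, p ω = 1) (f : Ω → α) (g : Ω → β)
    (h : ∀ x y, prob p (fun ω => f ω = x ∧ g ω = y)
      = prob p (fun ω => f ω = x) * prob p (fun ω => g ω = y)) :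
    entropy p (fun ω => (f ω, g ω)) = entropy p f + entropy p g := by
  have hne : Nonempty Ω := by
    rcases isEmpty_or_nonempty Ω with hE | hN
    · exfalso; rw [Finset.univ_eq_empty, Finset.sum_empty] at hsum; norm_num at hsum
    · exact hN
  have key := condIndep_entropy p hp f g (fun _ => ()) (by
    intro x y w
    have e1 : prob p (fun ω => f ω = x ∧ g ω = y ∧ (() : Unit) = w)
        = prob p (fun ω => f ω = x ∧ g ω = y) :=
      prob_congr p fun ω => by simp
    have e2 : prob p (fun ω => f ω = x ∧ (() : Unit) = w)
        = prob p (fun ω => f ω = x) := prob_congr p fun ω => by simp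
    have e3 : prob p (fun ω => g ω = y ∧ (() : Unit) = w)
        = prob p (fun ω => g ω = y) := prob_congr p fun ω => by simp
    rw [e1, e2, e3, prob_unit p hsum, mul_one, h x y])
  have c1 : entropy p (fun ω => (f ω, g ω, ())) = entropy p (fun ω => (f ω, g ω)) :=
    entropy_congr p _ _ (fun ab => (ab.1, ab.2, ())) (fun abu => (abu.1, abu.2.1))
      (fun ω => rfl) (fun ω => rfl)
  have c2 : entropy p (fun ω => (f ω, ())) = entropy p f :=
    entropy_congr p _ _ (fun a => (a, ())) (fun au => au.1) (fun ω => rfl) (fun ω => rfl)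
  have c3 : entropy p (fun ω => (g ω, ())) = entropy p g :=
    entropy_congr p _ _ (fun a => (a, ())) (fun au => au.1) (fun ω => rfl) (fun ω => rfl)
  haveI := hne
  have c4 : entropy p (fun _ : Ω => ()) = 0 := by
    rw [entropy_eq_sum p _ ({()} : Finset Unit) (fun ω => by simp),
        Finset.sum_singleton, prob_unit p hsum]
    simp [plog]
  rw [c1, c2, c3, c4] at key
  linarith

end helpers

/-- Single-step identity (equation (17) of the paper). -/
theorem single_step_identity {Ω α β γ δ : Type} [Fintype Ω]
    (p : Ω → ℝ) (hp : ∀ ω, 0 ≤ p ω) (hsum : ∑ ω, p ω = 1) (t : ℕ)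
    (X : ℕ → Ω → α) (A : ℕ → Ω → β) (D : ℕ → Ω → γ) (U : ℕ → Ω → δ)
    (hD : ∀ (d : γ) (v : (Fin t → β) × (Fin t → γ) × (Fin t → δ) × (Fin (t + 1) → α)),
      prob p (fun ω => D t ω = d ∧ (hist A t ω, hist D t ω, hist U t ω, hist X (t + 1) ω) = v) =
        prob p (fun ω => D t ω = d) *
          prob p (fun ω => (hist A t ω, hist D t ω, hist U t ω, hist X (t + 1) ω) = v))
    (hU : ∀ (x : Fin (t + 1) → α) (v : δ)
        (z : (Fin (t + 1) → β) × (Fin (t + 1) → γ) × (Fin t → δ)),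
      prob p (fun ω => hist X (t + 1) ω = x ∧ U t ω = v ∧
            (hist A (t + 1) ω, hist D (t + 1) ω, hist U t ω) = z) *
          prob p (fun ω => (hist A (t + 1) ω, hist D (t + 1) ω, hist U t ω) = z) =
        prob p (fun ω => hist X (t + 1) ω = x ∧
            (hist A (t + 1) ω, hist D (t + 1) ω, hist U t ω) = z) *
          prob p (fun ω => U t ω = v ∧ (hist A (t + 1) ω, hist D (t + 1) ω, hist U t ω) = z)) :
    condMutualInfo p (hist X (t + 1)) (A t)
        (fun ω => (hist A t ω, hist D (t + 1) ω, hist U t ω)) =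
      condMutualInfo p (hist X (t + 1)) (fun ω => (A t ω, D t ω, U t ω))
        (fun ω => (hist A t ω, hist D t ω, hist U t ω)) := by
  classical
  -- hist facts
  have hlast : ∀ {κ' : Type} (F : ℕ → Ω → κ') (ω : Ω),
      hist F (t+1) ω (Fin.last t) = F t ω := by
    intro κ' F ω; simp [hist]
  have hcast : ∀ {κ' : Type} (F : ℕ → Ω → κ') (ω : Ω),
      (fun i : Fin t => hist F (t+1) ω i.castSucc) = hist F t ω := by
    intro κ' F ω; funext i; simp [hist]
  have hsnoc : ∀ {κ' : Type} (F : ℕ → Ω → κ') (ω : Ω),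
      (Fin.snoc (hist F t ω) (F t ω) : Fin (t+1) → κ') = hist F (t+1) ω := by
    intro κ' F ω; funext i
    refine Fin.lastCases ?_ ?_ i
    · simp [hist, Fin.snoc_last]
    · intro j; simp [hist, Fin.snoc_castSucc]
  -- abbreviations (as plain lambdas to keep syntactic match)
  -- e1 : H(Xf,(Ah,Dh1,Uh)) = H(Dt) + H(W)
  have e1a : entropy p (fun ω => (hist X (t+1) ω, (hist A t ω, hist D (t+1) ω, hist U t ω)))
      = entropy p (fun ω => (D t ω, (hist A t ω, hist D t ω, hist U t ω, hist X (t+1) ω))) := by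
    refine entropy_congr p _ _
      (fun q => (q.2.2.2.2, (q.2.1, Fin.snoc q.2.2.1 q.1, q.2.2.2.1)))
      (fun r => (r.2.2.1 (Fin.last t), (r.2.1, fun i => r.2.2.1 i.castSucc, r.2.2.2, r.1)))
      (fun ω => ?_) (fun ω => ?_)
    · simp only [hsnoc]
    · simp only [hlast, hcast]
  have e1b : entropy p (fun ω => (D t ω, (hist A t ω, hist D t ω, hist U t ω, hist X (t+1) ω)))
      = entropy p (D t)
        + entropy p (fun ω => (hist A t ω, hist D t ω, hist U t ω, hist X (t+1) ω)) :=
    indep_entropy p hp hsum _ _ hD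
  -- e2 : H(Ah,Dh1,Uh) = H(Dt) + H(Ah,Dh,Uh)
  have e2a : entropy p (fun ω => (hist A t ω, hist D (t+1) ω, hist U t ω))
      = entropy p (fun ω => (D t ω, (hist A t ω, hist D t ω, hist U t ω))) := by
    refine entropy_congr p _ _
      (fun r => (r.2.1, Fin.snoc r.2.2.1 r.1, r.2.2.2))
      (fun l => (l.2.1 (Fin.last t), (l.1, fun i => l.2.1 i.castSucc, l.2.2)))
      (fun ω => ?_) (fun ω => ?_)
    · simp only [hsnoc]
    · simp only [hlast, hcast]
  have e2b : entropy p (fun ω => (D t ω, (hist A t ω, hist D t ω, hist U t ω)))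
      = entropy p (D t) + entropy p (fun ω => (hist A t ω, hist D t ω, hist U t ω)) := by
    refine indep_entropy p hp hsum _ _ (fun d y => ?_)
    exact indep_comp p (D t)
      (fun ω => (hist A t ω, hist D t ω, hist U t ω, hist X (t+1) ω))
      (fun q => (q.1, q.2.1, q.2.2.1)) hD d y
  -- e3 : H(Xf,(At,(Ah,Dh1,Uh))) = H(Xf,Z)
  have e3 : entropy p
        (fun ω => (hist X (t+1) ω, (A t ω, (hist A t ω, hist D (t+1) ω, hist U t ω))))
      = entropy p
        (fun ω => (hist X (t+1) ω, (hist A (t+1) ω, hist D (t+1) ω, hist U t ω))) := by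
    refine entropy_congr p _ _
      (fun r => (r.1, (r.2.1 (Fin.last t), (fun i => r.2.1 i.castSucc, r.2.2.1, r.2.2.2))))
      (fun l => (l.1, (Fin.snoc l.2.2.1 l.2.1, l.2.2.2.1, l.2.2.2.2)))
      (fun ω => ?_) (fun ω => ?_)
    · simp only [hlast, hcast]
    · simp only [hsnoc]
  -- e4 : H(At,(Ah,Dh1,Uh)) = H(Z)
  have e4 : entropy p (fun ω => (A t ω, (hist A t ω, hist D (t+1) ω, hist U t ω)))
      = entropy p (fun ω => (hist A (t+1) ω, hist D (t+1) ω, hist U t ω)) := by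
    refine entropy_congr p _ _
      (fun r => (r.1 (Fin.last t), (fun i => r.1 i.castSucc, r.2.1, r.2.2)))
      (fun l => (Fin.snoc l.2.1 l.1, l.2.2.1, l.2.2.2))
      (fun ω => ?_) (fun ω => ?_)
    · simp only [hlast, hcast]
    · simp only [hsnoc]
  -- e5 : H(Xf,(Ah,Dh,Uh)) = H(W)
  have e5 : entropy p (fun ω => (hist X (t+1) ω, (hist A t ω, hist D t ω, hist U t ω)))
      = entropy p (fun ω => (hist A t ω, hist D t ω, hist U t ω, hist X (t+1) ω)) :=
    entropy_congr p _ _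
      (fun w => (w.2.2.2, (w.1, w.2.1, w.2.2.1)))
      (fun l => (l.2.1, l.2.2.1, l.2.2.2, l.1))
      (fun ω => rfl) (fun ω => rfl)
  -- e7 : H(Xf,((At,Dt,Ut),(Ah,Dh,Uh))) = H(Xf,Ut,Z)
  have e7 : entropy p
        (fun ω => (hist X (t+1) ω, ((A t ω, D t ω, U t ω), (hist A t ω, hist D t ω, hist U t ω))))
      = entropy p
        (fun ω => (hist X (t+1) ω, U t ω, (hist A (t+1) ω, hist D (t+1) ω, hist U t ω))) := by
    refine entropy_congr p _ _
      (fun r => (r.1, ((r.2.2.1 (Fin.last t), r.2.2.2.1 (Fin.last t), r.2.1),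
        (fun i => r.2.2.1 i.castSucc, fun i => r.2.2.2.1 i.castSucc, r.2.2.2.2))))
      (fun l => (l.1, l.2.1.2.2,
        (Fin.snoc l.2.2.1 l.2.1.1, Fin.snoc l.2.2.2.1 l.2.1.2.1, l.2.2.2.2)))
      (fun ω => ?_) (fun ω => ?_)
    · simp only [hlast, hcast]
    · simp only [hsnoc]
  -- e8 : H((At,Dt,Ut),(Ah,Dh,Uh)) = H(Ut,Z)
  have e8 : entropy p
        (fun ω => ((A t ω, D t ω, U t ω), (hist A t ω, hist D t ω, hist U t ω)))
      = entropy p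
        (fun ω => (U t ω, (hist A (t+1) ω, hist D (t+1) ω, hist U t ω))) := by
    refine entropy_congr p _ _
      (fun r => ((r.2.1 (Fin.last t), r.2.2.1 (Fin.last t), r.1),
        (fun i => r.2.1 i.castSucc, fun i => r.2.2.1 i.castSucc, r.2.2.2)))
      (fun l => (l.1.2.2, (Fin.snoc l.2.1 l.1.1, Fin.snoc l.2.2.1 l.1.2.1, l.2.2.2)))
      (fun ω => ?_) (fun ω => ?_)
    · simp only [hlast, hcast]
    · simp only [hsnoc]
  -- Markov step
  have markov := condIndep_entropy p hp (hist X (t+1)) (U t)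
    (fun ω => (hist A (t+1) ω, hist D (t+1) ω, hist U t ω)) hU
  simp only [condMutualInfo, condEntropy]
  rw [e1a, e1b, e2a, e2b, e3, e4, e5, e7, e8]
  linarith [markov]
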